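/- arXiv:2602.20841 — 5 statements merged into one kernel-verified Lean document; each statement's English description precedes it below -/
import Mathlib

section
/- Let S be a set and F(S) the free group on S. Define (a, w) ▷ (b, z) := (a, w * z⁻¹ * b * z) on S × F(S), and the relation (a, w₁) ∼ (b, w₂) iff a = b and w₂ = aᵏ * w₁ for some k ∈ ℤ. Then ∼ is a ▷-congruence: if (a,w₁) ∼ (a,w₂) and (b,v₁) ∼ (b,v₂), then (a,w₁) ▷ (b,v₁) ∼ (a,w₂) ▷ (b,v₂). -/
def triOp {S : Type*} (p q : S × FreeGroup S) : S × FreeGroup S :=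
  (p.1, p.2 * q.2⁻¹ * FreeGroup.of q.1 * q.2)

def simQ {S : Type*} (p q : S × FreeGroup S) : Prop :=
  p.1 = q.1 ∧ ∃ k : ℤ, q.2 = (FreeGroup.of p.1) ^ k * p.2

/-- ∼ is a ▷-congruence. -/
theorem simQ_triOp_congruence {S : Type*} (a b : S) (w₁ w₂ v₁ v₂ : FreeGroup S)
    (h₁ : simQ (a, w₁) (a, w₂)) (h₂ : simQ (b, v₁) (b, v₂)) :
    simQ (triOp (a, w₁) (b, v₁)) (triOp (a, w₂) (b, v₂)) := by
  obtain ⟨-, k, hk⟩ := h₁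
  obtain ⟨-, m, hm⟩ := h₂
  refine ⟨rfl, k, ?_⟩
  simp only [] at hk hm
  simp only [triOp, hk, hm]
  group
end

section
/- Let S be a set and F(S) the free group on S. Define (a, w) ◁ (b, z) := (a, w * z⁻¹ * b⁻¹ * z) on S × F(S), and the relation (a, w₁) ∼ (b, w₂) iff a = b and w₂ = aᵏ * w₁ for some k ∈ ℤ. Then ∼ is a ◁-congruence: if (a,w₁) ∼ (a,w₂) and (b,v₁) ∼ (b,v₂), then (a,w₁) ◁ (b,v₁) ∼ (a,w₂) ◁ (b,v₂). -/
def triOpInv {S : Type*} (p q : S × FreeGroup S) : S × FreeGroup S :=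
  (p.1, p.2 * q.2⁻¹ * (FreeGroup.of q.1)⁻¹ * q.2)

/-- ∼ is a ◁-congruence. -/
theorem simQ_triOpInv_congruence {S : Type*} (a b : S) (w₁ w₂ v₁ v₂ : FreeGroup S)
    (h₁ : simQ (a, w₁) (a, w₂)) (h₂ : simQ (b, v₁) (b, v₂)) :
    simQ (triOpInv (a, w₁) (b, v₁)) (triOpInv (a, w₂) (b, v₂)) := by
  obtain ⟨-, k, hk⟩ := h₁
  obtain ⟨-, m, hm⟩ := h₂
  refine ⟨rfl, k, ?_⟩
  simp only at hk hm
  simp only [triOpInv, hk, hm]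
  group
end

section
/- Let S be a set, F(S) the free group on S, and Q_S := (S × F(S))/∼ the free quandle on S, where (a, w₁) ∼ (b, w₂) iff a = b and w₂ = aᵏw₁ for some k ∈ ℤ, with quandle operation induced by (a, w) ▷ (b, z) := (a, w z⁻¹ b z). Then Q_S with this operation is a quandle: it is idempotent, right translations are bijective, and it is self-distributive. -/
theorem simQ_equiv (S : Type*) : Equivalence (@simQ S) where
  refl p := ⟨rfl, 0, by simp⟩
  symm {p q} h := by
    obtain ⟨h1, k, hk⟩ := h
    exact ⟨h1.symm, -k, by rw [← h1, hk]; group⟩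
  trans {p q r} h h' := by
    obtain ⟨h1, k, hk⟩ := h
    obtain ⟨h2, l, hl⟩ := h'
    refine ⟨h1.trans h2, l + k, ?_⟩
    rw [hl, hk, ← h1]
    group

instance simSetoid (S : Type*) : Setoid (S × FreeGroup S) :=
  ⟨simQ, simQ_equiv S⟩

theorem simQ_triOp_cong {S : Type*} {p p' q q' : S × FreeGroup S}
    (h : simQ p p') (h' : simQ q q') : simQ (triOp p q) (triOp p' q') := by
  obtain ⟨h1, k, hk⟩ := h
  obtain ⟨h2, l, hl⟩ := h'
  refine ⟨h1, k, ?_⟩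
  simp only [triOp, hk, hl, ← h1, ← h2]
  group

theorem simQ_triOpInv_cong {S : Type*} {p p' q q' : S × FreeGroup S}
    (h : simQ p p') (h' : simQ q q') : simQ (triOpInv p q) (triOpInv p' q') := by
  obtain ⟨h1, k, hk⟩ := h
  obtain ⟨h2, l, hl⟩ := h'
  refine ⟨h1, k, ?_⟩
  simp only [triOpInv, hk, hl, ← h1, ← h2]
  group

/-- The free quandle on S as a quotient. -/
def FreeQuandle (S : Type*) : Type _ := Quotient (simSetoid S)

def fqOp {S : Type*} (x y : FreeQuandle S) : FreeQuandle S :=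
  Quotient.map₂ triOp (fun _ _ h _ _ h' => simQ_triOp_cong h h') x y

def fqOpInv {S : Type*} (x y : FreeQuandle S) : FreeQuandle S :=
  Quotient.map₂ triOpInv (fun _ _ h _ _ h' => simQ_triOpInv_cong h h') x y

/-- the free quandle Q_S is a quandle: idempotent, right
translations bijective, and self-distributive. -/
theorem freeQuandle_is_quandle (S : Type*) :
    (∀ x : FreeQuandle S, fqOp x x = x) ∧
    (∀ y : FreeQuandle S, Function.Bijective (fun x => fqOp x y)) ∧
    (∀ x y z : FreeQuandle S, fqOp (fqOp x y) z = fqOp (fqOp x z) (fqOp y z)) := by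
  refine ⟨?_, ?_, ?_⟩
  · intro x
    induction x using Quotient.inductionOn with
    | _ p =>
      apply Quotient.sound
      exact ⟨rfl, -1, by simp [triOp]⟩
  · intro y
    have hinv : ∀ x : FreeQuandle S, fqOpInv (fqOp x y) y = x := by
      intro x
      induction x using Quotient.inductionOn with
      | _ p =>
        induction y using Quotient.inductionOn with
        | _ q =>
          apply Quotient.sound
          refine ⟨rfl, 0, ?_⟩
          simp [triOp, triOpInv]

    have hinv' : ∀ x : FreeQuandle S, fqOp (fqOpInv x y) y = x := by
      intro x
      induction x using Quotient.inductionOn with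
      | _ p =>
        induction y using Quotient.inductionOn with
        | _ q =>
          apply Quotient.sound
          refine ⟨rfl, 0, ?_⟩
          simp [triOp, triOpInv]

    exact ⟨Function.LeftInverse.injective hinv, Function.RightInverse.surjective hinv'⟩
  · intro x y z
    induction x using Quotient.inductionOn with
    | _ p =>
      induction y using Quotient.inductionOn with
      | _ q =>
        induction z using Quotient.inductionOn with
        | _ r =>
          apply Quotient.sound
          refine ⟨rfl, 0, ?_⟩
          simp [triOp]
          group
end

section
/- Let S be a set, G a group, Q_S the free quandle on S (the quotient of S × F(S) by (a,w₁) ∼ (b,w₂) iff a = b and w₂ = aᵏw₁ for some k ∈ ℤ, with operation [(a,w)] ▷ [(b,z)] = [(a, w z⁻¹ b z)]), and ι : S → Q_S the map a ↦ [(a, 1)]. For any function f : S → G, there exists a unique quandle homomorphism f̄ : Q_S → conj(G) such that f̄ ∘ ι = f, where conj(G) is G with operation x ▷ y := y⁻¹ x y. -/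
/-- The canonical inclusion of S into the free quandle. -/
def fqIota {S : Type*} (a : S) : FreeQuandle S := Quotient.mk _ (a, 1)


/-! The extension is forced: `mk a w` is obtained from `fqIota a` by acting successively with the
letters of `w`, so a quandle homomorphism to `conj(G)` must send it to the conjugate of `f a` by the
image of `w` under the homomorphism `FreeGroup S →* G` extending `f`. Conversely, this conjugate is
unchanged by `w ↦ aᵏ w`, since powers of `f a` commute with `f a`, and it turns `▷` into
conjugation because the image of `w z⁻¹ b z` is the product of the images. -/

namespace FreeQuandle

variable {S G : Type*} [Group G]

def mk (a : S) (w : FreeGroup S) : FreeQuandle S :=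
  ⟦(a, w)⟧

@[elab_as_elim]
theorem ind {motive : FreeQuandle S → Prop} (h : ∀ a w, motive (mk a w)) (x : FreeQuandle S) :
    motive x :=
  Quotient.ind (fun p => h p.1 p.2) x

theorem fqIota_eq_mk (a : S) : fqIota a = mk a 1 :=
  rfl

theorem fqOp_mk (a b : S) (w z : FreeGroup S) :
    fqOp (mk a w) (mk b z) = mk a (w * z⁻¹ * FreeGroup.of b * z) :=
  rfl

theorem fqOpInv_mk (a b : S) (w z : FreeGroup S) :
    fqOpInv (mk a w) (mk b z) = mk a (w * z⁻¹ * (FreeGroup.of b)⁻¹ * z) :=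
  rfl

def liftAux (f : S → G) (p : S × FreeGroup S) : G :=
  (FreeGroup.lift f p.2)⁻¹ * f p.1 * FreeGroup.lift f p.2

theorem liftAux_eq_of_simQ (f : S → G) {p q : S × FreeGroup S} (h : simQ p q) :
    liftAux f p = liftAux f q := by
  obtain ⟨a, w⟩ := p
  obtain ⟨b, z⟩ := q
  obtain ⟨rfl, k, rfl⟩ := h
  simp only [liftAux, map_mul, map_zpow, FreeGroup.lift_apply_of]
  group

def lift (f : S → G) : FreeQuandle S → G :=
  Quotient.lift (liftAux f) fun _ _ => liftAux_eq_of_simQ f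

@[simp]
theorem lift_mk (f : S → G) (a : S) (w : FreeGroup S) :
    lift f (mk a w) = (FreeGroup.lift f w)⁻¹ * f a * FreeGroup.lift f w :=
  rfl

theorem lift_fqOp (f : S → G) (x y : FreeQuandle S) :
    lift f (fqOp x y) = (lift f y)⁻¹ * lift f x * lift f y := by
  induction x using ind
  induction y using ind
  simp only [fqOp_mk, lift_mk, map_mul, map_inv, FreeGroup.lift_apply_of]
  group

theorem lift_fqOpInv (f : S → G) (x y : FreeQuandle S) :
    lift f (fqOpInv x y) = lift f y * lift f x * (lift f y)⁻¹ := by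
  induction x using ind
  induction y using ind
  simp only [fqOpInv_mk, lift_mk, map_mul, map_inv, FreeGroup.lift_apply_of]
  group

theorem lift_fqIota (f : S → G) (a : S) : lift f (fqIota a) = f a := by
  simp [fqIota_eq_mk]

theorem fqOp_mk_fqIota (a b : S) (w : FreeGroup S) :
    fqOp (mk a w) (fqIota b) = mk a (w * FreeGroup.of b) := by
  rw [fqIota_eq_mk, fqOp_mk, inv_one, mul_one, mul_one]

theorem fqOpInv_mk_fqIota (a b : S) (w : FreeGroup S) :
    fqOpInv (mk a w) (fqIota b) = mk a (w * (FreeGroup.of b)⁻¹) := by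
  rw [fqIota_eq_mk, fqOpInv_mk, inv_one, mul_one, mul_one]

theorem apply_mk_mul_eq_conj {g : FreeQuandle S → G}
    (hOp : ∀ x y, g (fqOp x y) = (g y)⁻¹ * g x * g y)
    (hOpInv : ∀ x y, g (fqOpInv x y) = g y * g x * (g y)⁻¹)
    (a : S) (v w : FreeGroup S) :
    g (mk a (v * w)) =
      (FreeGroup.lift (g ∘ fqIota) w)⁻¹ * g (mk a v) * FreeGroup.lift (g ∘ fqIota) w := by
  induction w generalizing v with
  | C1 => simp
  | of b => rw [← fqOp_mk_fqIota, hOp]; simp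
  | inv_of b _ => rw [← fqOpInv_mk_fqIota, hOpInv]; simp
  | mul x y hx hy =>
    rw [← mul_assoc, hy, hx, map_mul]
    group

theorem lift_unique {f : S → G} {g : FreeQuandle S → G}
    (hOp : ∀ x y, g (fqOp x y) = (g y)⁻¹ * g x * g y)
    (hOpInv : ∀ x y, g (fqOpInv x y) = g y * g x * (g y)⁻¹)
    (hIota : ∀ a, g (fqIota a) = f a) : g = lift f := by
  have hf : g ∘ fqIota = f := funext hIota
  funext x
  induction x using ind with
  | h a w =>
    calc g (mk a w) = g (mk a (1 * w)) := by rw [one_mul]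
      _ = (FreeGroup.lift (g ∘ fqIota) w)⁻¹ * g (fqIota a) * FreeGroup.lift (g ∘ fqIota) w :=
        apply_mk_mul_eq_conj hOp hOpInv a 1 w
      _ = lift f (mk a w) := by rw [hf, hIota, lift_mk]

end FreeQuandle

open FreeQuandle in
/-- universal property of the free quandle with respect to
conjugation quandles: every map f : S → G extends uniquely to a quandle
homomorphism Q_S → conj(G). -/
theorem freeQuandle_universal_property {S G : Type*} [Group G] (f : S → G) :
    ∃! fbar : FreeQuandle S → G,
      (∀ x y : FreeQuandle S, fbar (fqOp x y) = (fbar y)⁻¹ * fbar x * fbar y) ∧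
      (∀ x y : FreeQuandle S, fbar (fqOpInv x y) = fbar y * fbar x * (fbar y)⁻¹) ∧
      (∀ a : S, fbar (fqIota a) = f a) :=
  ⟨lift f, ⟨lift_fqOp f, lift_fqOpInv f, lift_fqIota f⟩,
    fun _ ⟨hOp, hOpInv, hIota⟩ => lift_unique hOp hOpInv hIota⟩
end

section
/- Let S be a set, F(S) the free group on S. Any equivalence relation ∼ on S × F(S) that is a ▷-congruence for (a,w) ▷ (b,z) := (a, w z⁻¹ b z) and such that the quotient (S × F(S))/∼ with the induced operation satisfies the idempotence law [x] ▷ [x] = [x] must contain the relation ∼_Q defined by (a, w₁) ∼_Q (b, w₂) iff a = b and w₂ = aᵏw₁ for some k ∈ ℤ. That is, (a, w₁) ∼_Q (b, w₂) implies (a, w₁) ∼ (b, w₂). -/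
/-! Idempotence says `(a, w) ∼ (a, w) ▷ (a, w) = (a, a * w)`, so left multiplication by `a`
preserves classes; by symmetry and transitivity so does left multiplication by every `aᵏ`. -/

theorem triOp_self {S : Type*} (p : S × FreeGroup S) :
    triOp p p = (p.1, FreeGroup.of p.1 * p.2) := by
  simp [triOp]

theorem Equivalence.rel_zpow_mul_of_rel_mul {G : Type*} [Group G] {r : G → G → Prop}
    (hr : Equivalence r) {g : G} (hg : ∀ x, r (g * x) x) (k : ℤ) (x : G) :
    r (g ^ k * x) x := by
  refine zpow_induction_left (P := fun h => ∀ x, r (h * x) x) ?_ ?_ ?_ k x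
  · intro x
    simpa using hr.refl x
  · intro a ha x
    simpa only [mul_assoc] using hr.trans (hg _) (ha x)
  · intro a ha x
    have hback : r (a * x) (g⁻¹ * (a * x)) := by simpa using hg (g⁻¹ * (a * x))
    simpa only [mul_assoc] using hr.trans (hr.symm hback) (ha x)

theorem simQ_smallest_congruence_general {S : Type*} (sim : (S × FreeGroup S) → (S × FreeGroup S) → Prop)
    (h_equiv : Equivalence sim)
    (h_idem : ∀ p, sim (triOp p p) p) :
    ∀ p q : S × FreeGroup S, simQ p q → sim p q := by
  rintro ⟨a, w⟩ ⟨b, z⟩ ⟨rfl : a = b, k, rfl⟩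
  have h_fiber : Equivalence fun x y : FreeGroup S => sim (a, x) (a, y) :=
    h_equiv.comap (Prod.mk a)
  have h_step (x : FreeGroup S) : sim (a, FreeGroup.of a * x) (a, x) := by
    simpa only [triOp_self] using h_idem (a, x)
  exact h_equiv.symm (h_fiber.rel_zpow_mul_of_rel_mul h_step k w)

/-- ∼_Q is the smallest ▷-congruence whose quotient is idempotent:
any equivalence relation that is a ▷-congruence and satisfies the idempotence law
on the quotient (equivalently, x ▷ x ∼ x for all x) contains ∼_Q. -/
theorem simQ_smallest_congruence {S : Type*} (sim : (S × FreeGroup S) → (S × FreeGroup S) → Prop)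
    (h_equiv : Equivalence sim)
    (h_cong : ∀ p p' q q', sim p p' → sim q q' → sim (triOp p q) (triOp p' q'))
    (h_idem : ∀ p, sim (triOp p p) p) :
    ∀ p q : S × FreeGroup S, simQ p q → sim p q :=
  simQ_smallest_congruence_general sim h_equiv h_idem
end
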